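/- arXiv:2401.03600 — 3 statements merged into one kernel-verified Lean document; each statement's English description precedes it below -/
import Mathlib

section
/- If f is holomorphic and injective on the open unit disk with f(0) = 0 and f'(0) = 1, and n ≥ 1, then there exists a holomorphic injective function g on the open unit disk with g(0) = 0, g'(0) = 1, and g(z)^n = f(z^n) for all z in the disk. -/
open Complex Metric

/-!
Write `f z = z F(z)` with `F = dslope f 0`; injectivity of `f` makes `F` zero-free on the disk,
and `F 0 = f' 0 = 1`. On a disk a zero-free holomorphic function has a holomorphic logarithm
(a primitive of `F'/F`, by Morera), hence a holomorphic `n`-th root `h` with `h 0 = 1`.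
Then `g z = z h(z^n)` satisfies `g^n = z^n F(z^n) = f(z^n)`, and `g z = g w` forces
`f(z^n) = f(w^n)`, so `z^n = w^n`, so `h(z^n) = h(w^n) ≠ 0` and `z = w`.
-/

theorem exists_exp_eq_on_ball {F : ℂ → ℂ} {c : ℂ} {r : ℝ}
    (hF : DifferentiableOn ℂ F (ball c r)) (hF₀ : ∀ z ∈ ball c r, F z ≠ 0) {w : ℂ}
    (hw : exp w = F c) :
    ∃ L : ℂ → ℂ, DifferentiableOn ℂ L (ball c r) ∧ L c = w ∧
      ∀ z ∈ ball c r, exp (L z) = F z := by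
  obtain ⟨L, hLc, hL⟩ :=
    ((hF.deriv isOpen_ball).div hF hF₀).isExactOn_ball.with_val_at c w
  refine ⟨L, fun z hz => (hL z hz).differentiableAt.differentiableWithinAt, hLc, fun z hz => ?_⟩
  have hderiv : ∀ x ∈ ball c r, HasDerivAt (fun x => F x * exp (-L x)) 0 x := by
    intro x hx
    have hFx := (hF.differentiableAt (isOpen_ball.mem_nhds hx)).hasDerivAt
    refine (hFx.fun_mul (hL x hx).fun_neg.cexp).congr_deriv ?_
    simp only [Pi.div_apply]
    field_simp [hF₀ x hx]
    ring
  have hconst : F z * exp (-L z) = F c * exp (-L c) :=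
    isOpen_ball.is_const_of_deriv_eq_zero (convex_ball c r).isPreconnected
      (fun x hx => (hderiv x hx).differentiableAt.differentiableWithinAt)
      (fun x hx => (hderiv x hx).deriv) hz (mem_ball_self (pos_of_mem_ball hz))
  rw [hLc, ← hw, ← exp_add, add_neg_cancel, exp_zero, exp_neg,
    mul_inv_eq_one₀ (exp_ne_zero _)] at hconst
  exact hconst.symm

theorem exists_pow_eq_on_ball {F : ℂ → ℂ} {c : ℂ} {r : ℝ}
    (hF : DifferentiableOn ℂ F (ball c r)) (hF₀ : ∀ z ∈ ball c r, F z ≠ 0) (hFc : F c = 1)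
    {n : ℕ} (hn : n ≠ 0) :
    ∃ h : ℂ → ℂ, DifferentiableOn ℂ h (ball c r) ∧ h c = 1 ∧
      ∀ z ∈ ball c r, h z ^ n = F z := by
  obtain ⟨L, hLd, hLc, hL⟩ := exists_exp_eq_on_ball hF hF₀ (w := 0) (by rw [exp_zero, hFc])
  refine ⟨fun z => exp (L z / n), (hLd.div_const _).cexp, by simp [hLc], fun z hz => ?_⟩
  rw [← exp_nat_mul, mul_div_cancel₀ _ (Nat.cast_ne_zero.mpr hn), hL z hz]

theorem Set.InjOn.dslope_ne_zero {𝕜 E : Type*} [NontriviallyNormedField 𝕜]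
    [NormedAddCommGroup E] [NormedSpace 𝕜 E] {f : 𝕜 → E} {s : Set 𝕜} {a b : 𝕜}
    (hf : Set.InjOn f s) (ha : a ∈ s) (hb : b ∈ s) (hf' : deriv f a ≠ 0) :
    dslope f a b ≠ 0 := by
  rcases eq_or_ne b a with rfl | hba
  · rwa [dslope_same]
  rw [dslope_of_ne _ hba, slope, smul_ne_zero_iff, vsub_eq_sub, sub_ne_zero, ne_eq, inv_eq_zero,
    sub_eq_zero]
  exact ⟨hba, fun h => hba (hf hb ha h)⟩

theorem Set.InjOn.mul_comp_pow {M : Type*} [CommMonoidWithZero M] [IsCancelMulZero M]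
    {f h : M → M} {s t : Set M} {n : ℕ} (hf : Set.InjOn f t) (hst : Set.MapsTo (· ^ n) s t)
    (hh : ∀ z ∈ s, h (z ^ n) ≠ 0) (hpow : ∀ z ∈ s, (z * h (z ^ n)) ^ n = f (z ^ n)) :
    Set.InjOn (fun z => z * h (z ^ n)) s := by
  intro x hx y hy hxy
  have hxy_pow : x ^ n = y ^ n :=
    hf (hst hx) (hst hy) (by rw [← hpow x hx, ← hpow y hy]; exact congrArg (· ^ n) hxy)
  simp only [hxy_pow] at hxy
  exact mul_right_cancel₀ (hh y hy) hxy

theorem pow_mem_ball_zero_one {𝕜 : Type*} [NormedDivisionRing 𝕜] {z : 𝕜} {n : ℕ} (hn : n ≠ 0)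
    (hz : z ∈ ball (0 : 𝕜) 1) : z ^ n ∈ ball (0 : 𝕜) 1 := by
  rw [mem_ball_zero_iff, norm_pow] at *
  exact pow_lt_one₀ (norm_nonneg z) hz hn

/-- If `f` is holomorphic and injective on the unit disk with `f 0 = 0` and `f' 0 = 1`,
and `n ≥ 1`, then there is a holomorphic injective `g` on the disk with `g 0 = 0`,
`g' 0 = 1`, and `g z ^ n = f (z ^ n)` on the disk (the `n`-th root transform). -/
theorem nth_root_transform_univalent (f : ℂ → ℂ) (n : ℕ) (hn : 1 ≤ n)
    (hf : DifferentiableOn ℂ f (ball (0 : ℂ) 1))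
    (hinj : Set.InjOn f (ball (0 : ℂ) 1))
    (hf0 : f 0 = 0) (hf'0 : deriv f 0 = 1) :
    ∃ g : ℂ → ℂ, DifferentiableOn ℂ g (ball (0 : ℂ) 1) ∧
      Set.InjOn g (ball (0 : ℂ) 1) ∧ g 0 = 0 ∧ deriv g 0 = 1 ∧
      ∀ z ∈ ball (0 : ℂ) 1, g z ^ n = f (z ^ n) := by
  have hn₀ : n ≠ 0 := Nat.one_le_iff_ne_zero.mp hn
  have h0 : (0 : ℂ) ∈ ball (0 : ℂ) 1 := mem_ball_self one_pos
  have hmaps : Set.MapsTo (· ^ n) (ball (0 : ℂ) 1) (ball 0 1) :=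
    fun z => pow_mem_ball_zero_one hn₀
  have hF : DifferentiableOn ℂ (dslope f 0) (ball 0 1) :=
    (differentiableOn_dslope (isOpen_ball.mem_nhds h0)).mpr hf
  have hF₀ : ∀ z ∈ ball (0 : ℂ) 1, dslope f 0 z ≠ 0 :=
    fun z hz => hinj.dslope_ne_zero h0 hz (hf'0 ▸ one_ne_zero)
  obtain ⟨h, hhd, hh0, hhpow⟩ :=
    exists_pow_eq_on_ball hF hF₀ (by rw [dslope_same, hf'0]) hn₀
  have hpow : ∀ z ∈ ball (0 : ℂ) 1, (z * h (z ^ n)) ^ n = f (z ^ n) := fun z hz => by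
    rw [mul_pow, hhpow _ (hmaps hz), ← smul_eq_mul]
    simpa using sub_smul_dslope_of_zero hf0 (z ^ n)
  have hh₀ : ∀ z ∈ ball (0 : ℂ) 1, h (z ^ n) ≠ 0 := fun z hz hzero =>
    hF₀ _ (hmaps hz) (by rw [← hhpow _ (hmaps hz), hzero, zero_pow hn₀])
  have hk : DifferentiableOn ℂ (fun z => h (z ^ n)) (ball 0 1) :=
    hhd.comp (differentiable_pow n).differentiableOn hmaps
  have hderiv : HasDerivAt (fun z => z * h (z ^ n)) 1 0 := by
    simpa [hn₀, hh0] using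
      (hasDerivAt_id' 0).fun_mul ((hk.differentiableAt (isOpen_ball.mem_nhds h0)).hasDerivAt)
  exact ⟨fun z => z * h (z ^ n), differentiableOn_id.mul hk, hinj.mul_comp_pow hmaps hh₀ hpow,
    zero_mul _, hderiv.deriv, hpow⟩
end

section
/- For each integer m ≥ 1, the map φ₊(z) = 2^{2/m} z (1 + z^m)^{-2/m} (defined via the principal branch, normalized so φ₊'(0) = 2^{2/m} > 0) is injective on the open unit disk and maps it onto the complement in ℂ of the union of the m rays {r·e^{2πij/m} : r ≥ 1}, j = 0, …, m−1. -/
open Complex Metric Real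

/-!
Write `K(u) = 4u/(1+u)²`. Then `φ₊(z)^m = K(z^m)`, and `φ₊(ζz) = ζ φ₊(z)` for every `m`-th root
of unity `ζ`. Since `1 - K(u) = ((1-u)/(1+u))²`, and the Cayley transform `u ↦ (1-u)/(1+u)` maps
the disk onto the right half-plane, whose squares fill `ℂ ∖ (-∞, 0]`, `K` maps the disk
injectively onto `ℂ ∖ [1, ∞)`; and `w` lies on a slit exactly when `w^m ∈ [1, ∞)`.
So `φ₊(z₁) = φ₊(z₂)` forces `z₁^m = z₂^m`, hence `z₁ = z₂`; and a point `w` off the slits has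
`w^m = K(z^m)` for some `z` in the disk, whence `w = ζ φ₊(z) = φ₊(ζz)` for a root of unity `ζ`.
-/

/-- `koebe u = -4 k(-u)` for the Koebe function `k(z) = z / (1 - z)²`. -/
noncomputable def koebe (u : ℂ) : ℂ := 4 * u / (1 + u) ^ 2

noncomputable def cayley (u : ℂ) : ℂ := (1 - u) / (1 + u)

noncomputable def slitMap (m : ℕ) (z : ℂ) : ℂ :=
  (2 : ℂ) ^ ((2 : ℂ) / m) * z * (1 + z ^ m) ^ (-((2 : ℂ) / m))

lemma one_add_ne_zero_of_mem_ball {u : ℂ} (hu : u ∈ ball (0 : ℂ) 1) : 1 + u ≠ 0 :=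
  slitPlane_ne_zero (mem_slitPlane_of_norm_lt_one (mem_ball_zero_iff.mp hu))

lemma pow_mem_ball_zero_one_iff {m : ℕ} (hm : m ≠ 0) {z : ℂ} :
    z ^ m ∈ ball (0 : ℂ) 1 ↔ z ∈ ball (0 : ℂ) 1 := by
  rw [mem_ball_zero_iff, mem_ball_zero_iff, norm_pow,
    pow_lt_one_iff_of_nonneg (norm_nonneg z) hm]

lemma cayley_cayley {u : ℂ} (hu : 1 + u ≠ 0) : cayley (cayley u) = u := by
  unfold cayley
  field_simp
  ring

lemma one_add_cayley_ne_zero {u : ℂ} (hu : 1 + u ≠ 0) : 1 + cayley u ≠ 0 := by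
  have : 1 + cayley u = 2 / (1 + u) := by unfold cayley; field_simp; ring
  rw [this]
  exact div_ne_zero two_ne_zero hu

lemma norm_cayley_lt_one_iff {u : ℂ} (hu : 1 + u ≠ 0) : ‖cayley u‖ < 1 ↔ 0 < u.re := by
  rw [cayley, norm_div, div_lt_one (norm_pos_iff.mpr hu),
    ← pow_lt_pow_iff_left₀ (norm_nonneg _) (norm_nonneg _) two_ne_zero,
    Complex.sq_norm, Complex.sq_norm, normSq_apply, normSq_apply]
  simp only [sub_re, sub_im, add_re, add_im, one_re, one_im]
  constructor <;> intro h <;> nlinarith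

lemma one_sub_koebe_eq_cayley_sq {u : ℂ} (hu : 1 + u ≠ 0) : 1 - koebe u = cayley u ^ 2 := by
  unfold koebe cayley
  field_simp
  ring

lemma sq_mem_slitPlane {e : ℂ} (he : 0 < e.re) : e ^ 2 ∈ slitPlane := by
  rw [mem_slitPlane_iff, sq, mul_re, mul_im]
  by_cases him : e.im = 0
  · left; simp [him, he]
  · right
    rw [show e.re * e.im + e.im * e.re = 2 * e.re * e.im by ring]
    exact mul_ne_zero (mul_ne_zero two_ne_zero he.ne') him

lemma exists_sq_eq_of_mem_slitPlane {v : ℂ} (hv : v ∈ slitPlane) :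
    ∃ e : ℂ, 0 < e.re ∧ e ^ 2 = v := by
  refine ⟨v ^ (2⁻¹ : ℂ), ?_, ?_⟩
  · rw [cpow_inv_two_re]
    apply Real.sqrt_pos.mpr
    rcases mem_slitPlane_iff.mp hv with h | h
    · linarith [norm_nonneg v]
    · linarith [abs_re_lt_norm.mpr h, neg_abs_le v.re]
  · exact_mod_cast cpow_ofNat_inv_pow v 2

lemma koebe_injOn : Set.InjOn koebe (ball 0 1) := by
  intro u hu v hv h
  have hcross : 4 * u * (1 + v) ^ 2 = 4 * v * (1 + u) ^ 2 :=
    (div_eq_div_iff (pow_ne_zero 2 (one_add_ne_zero_of_mem_ball hu))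
      (pow_ne_zero 2 (one_add_ne_zero_of_mem_ball hv))).mp h
  have hfactor : (u - v) * (1 - u * v) = 0 := by linear_combination hcross / 4
  have huv : 1 - u * v ≠ 0 := by
    rw [sub_ne_zero]
    intro h1
    rw [mem_ball_zero_iff] at hu hv
    have : ‖u * v‖ < 1 := by
      rw [norm_mul]; nlinarith [norm_nonneg u, norm_nonneg v]
    rw [← h1, norm_one] at this
    exact lt_irrefl _ this
  exact sub_eq_zero.mp ((mul_eq_zero.mp hfactor).resolve_right huv)

lemma koebe_image_ball : koebe '' ball 0 1 = {v | 1 - v ∈ slitPlane} := by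
  ext v
  constructor
  · rintro ⟨u, hu, rfl⟩
    have hu0 := one_add_ne_zero_of_mem_ball hu
    have hre : 0 < (cayley u).re := by
      rw [← norm_cayley_lt_one_iff (one_add_cayley_ne_zero hu0), cayley_cayley hu0]
      exact mem_ball_zero_iff.mp hu
    rw [Set.mem_ofPred_eq, one_sub_koebe_eq_cayley_sq hu0]
    exact sq_mem_slitPlane hre
  · intro hv
    obtain ⟨e, hre, he⟩ := exists_sq_eq_of_mem_slitPlane hv
    have he0 : 1 + e ≠ 0 := fun h => by
      have := congrArg re h
      rw [add_re, one_re, zero_re] at this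
      linarith
    refine ⟨cayley e, mem_ball_zero_iff.mpr ((norm_cayley_lt_one_iff he0).mpr hre), ?_⟩
    have := one_sub_koebe_eq_cayley_sq (one_add_cayley_ne_zero he0)
    rw [cayley_cayley he0, he] at this
    linear_combination -this

lemma one_sub_mem_slitPlane_iff {v : ℂ} :
    1 - v ∈ slitPlane ↔ ¬ ∃ s : ℝ, 1 ≤ s ∧ v = s := by
  rw [mem_slitPlane_iff, sub_re, sub_im, one_re, one_im]
  constructor
  · rintro h ⟨s, hs, rfl⟩
    rw [ofReal_re, ofReal_im, sub_self, ne_self_iff_false, or_false] at h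
    linarith
  · intro h
    by_contra! hc
    exact h ⟨v.re, by linarith [hc.1], ext rfl (by rw [ofReal_im]; linarith [hc.2])⟩

lemma exists_pow_eq_one_mul_of_pow_eq_pow {K : Type*} [Field K] {m : ℕ} (hm : m ≠ 0)
    {a b : K} (h : a ^ m = b ^ m) : ∃ ζ : K, ζ ^ m = 1 ∧ a = ζ * b := by
  by_cases hb : b = 0
  · subst hb
    exact ⟨1, one_pow m, by rw [one_mul]; exact (pow_eq_zero_iff hm).mp (h.trans (zero_pow hm))⟩
  · exact ⟨a / b, by rw [div_pow, h, div_self (pow_ne_zero m hb)], (div_mul_cancel₀ a hb).symm⟩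

lemma exists_ray_iff_pow_eq_ofReal {m : ℕ} (hm : m ≠ 0) {w : ℂ} :
    (∃ j : ℕ, j < m ∧ ∃ r : ℝ, 1 ≤ r ∧
        w = (r : ℂ) * Complex.exp (2 * Real.pi * Complex.I * j / m)) ↔
      ∃ s : ℝ, 1 ≤ s ∧ w ^ m = s := by
  have hm' : (m : ℂ) ≠ 0 := Nat.cast_ne_zero.mpr hm
  constructor
  · rintro ⟨j, -, r, hr, rfl⟩
    refine ⟨r ^ m, one_le_pow₀ hr, ?_⟩
    rw [mul_pow, ← Complex.exp_nat_mul,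
      show (m : ℂ) * (2 * π * I * j / m) = j * (2 * π * I) by field_simp,
      exp_nat_mul_two_pi_mul_I]
    push_cast
    ring
  · rintro ⟨s, hs, hw⟩
    set r : ℝ := s ^ (m⁻¹ : ℝ)
    have hr : (r : ℂ) ^ m = s := by
      exact_mod_cast Real.rpow_inv_natCast_pow (by linarith) hm
    obtain ⟨ζ, hζ, rfl⟩ := exists_pow_eq_one_mul_of_pow_eq_pow hm (hw.trans hr.symm)
    have : NeZero m := ⟨hm⟩
    obtain ⟨j, hj, rfl⟩ := (isPrimitiveRoot_exp m hm).eq_pow_of_pow_eq_one hζ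
    refine ⟨j, hj, r, Real.one_le_rpow hs (by positivity), ?_⟩
    rw [mul_comm, ← Complex.exp_nat_mul]
    congr 2
    field_simp

lemma slitMap_pow {m : ℕ} (hm : m ≠ 0) (z : ℂ) : slitMap m z ^ m = koebe (z ^ m) := by
  have hm' : (m : ℂ) ≠ 0 := Nat.cast_ne_zero.mpr hm
  have hconst : ((2 : ℂ) ^ ((2 : ℂ) / m)) ^ m = 4 := by
    rw [← cpow_nat_mul, show (m : ℂ) * (2 / m) = (2 : ℕ) by push_cast; field_simp,
      cpow_natCast]
    norm_num
  have hfactor : ((1 + z ^ m) ^ (-((2 : ℂ) / m))) ^ m = ((1 + z ^ m) ^ 2)⁻¹ := by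
    rw [← cpow_nat_mul, show (m : ℂ) * (-(2 / m)) = (-2 : ℤ) by push_cast; field_simp,
      cpow_intCast, zpow_neg, zpow_two, sq]
  rw [slitMap, mul_pow, mul_pow, hconst, hfactor, koebe, div_eq_mul_inv]

lemma slitMap_mul_of_pow_eq_one {m : ℕ} {ζ : ℂ} (hζ : ζ ^ m = 1) (z : ℂ) :
    slitMap m (ζ * z) = ζ * slitMap m z := by
  rw [slitMap, slitMap, mul_pow, hζ, one_mul]
  ring

lemma slitMap_injOn {m : ℕ} (hm : m ≠ 0) : Set.InjOn (slitMap m) (ball 0 1) := by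
  intro z₁ hz₁ z₂ hz₂ h
  have hpow : z₁ ^ m = z₂ ^ m :=
    koebe_injOn ((pow_mem_ball_zero_one_iff hm).mpr hz₁) ((pow_mem_ball_zero_one_iff hm).mpr hz₂)
      (by rw [← slitMap_pow hm, ← slitMap_pow hm, h])
  have hconst : (2 : ℂ) ^ ((2 : ℂ) / m) ≠ 0 := by simp [cpow_eq_zero_iff]
  have hfactor : (1 + z₂ ^ m) ^ (-((2 : ℂ) / m)) ≠ 0 := fun h0 =>
    one_add_ne_zero_of_mem_ball ((pow_mem_ball_zero_one_iff hm).mpr hz₂)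
      ((cpow_eq_zero_iff _ _).mp h0).1
  rw [slitMap, slitMap, hpow] at h
  exact mul_left_cancel₀ hconst (mul_right_cancel₀ hfactor h)

lemma slitMap_image_ball {m : ℕ} (hm : m ≠ 0) :
    slitMap m '' ball 0 1 = (· ^ m) ⁻¹' (koebe '' ball 0 1) := by
  ext w
  constructor
  · rintro ⟨z, hz, rfl⟩
    exact ⟨z ^ m, (pow_mem_ball_zero_one_iff hm).mpr hz, (slitMap_pow hm z).symm⟩
  · rintro ⟨u, hu, hw⟩
    obtain ⟨z, rfl⟩ := IsAlgClosed.exists_pow_nat_eq u (Nat.pos_of_ne_zero hm)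
    rw [pow_mem_ball_zero_one_iff hm] at hu
    obtain ⟨ζ, hζ, rfl⟩ :=
      exists_pow_eq_one_mul_of_pow_eq_pow hm (hw.symm.trans (slitMap_pow hm z).symm)
    refine ⟨ζ * z, ?_, slitMap_mul_of_pow_eq_one hζ z⟩
    rwa [mem_ball_zero_iff, norm_mul, norm_eq_one_of_pow_eq_one hζ hm, one_mul,
      ← mem_ball_zero_iff]

/-- For `m ≥ 1`, the map `φ₊(z) = 2^(2/m) z (1+z^m)^(-2/m)` (principal branch,
equal to `2^(2/m) z` to first order at `0`) is injective on the unit disk and maps it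
onto the complement of the union of the `m` radial slits `{r e^(2πij/m) : r ≥ 1}`. -/
theorem m_slit_map_bijects (m : ℕ) (hm : 1 ≤ m) :
    Set.InjOn
      (fun z : ℂ => (2 : ℂ) ^ ((2 : ℂ) / m) * z * (1 + z ^ m) ^ (-((2 : ℂ) / m)))
      (ball (0 : ℂ) 1) ∧
    (fun z : ℂ => (2 : ℂ) ^ ((2 : ℂ) / m) * z * (1 + z ^ m) ^ (-((2 : ℂ) / m))) ''
        (ball (0 : ℂ) 1) =
      {w : ℂ | ¬ ∃ j : ℕ, j < m ∧ ∃ r : ℝ, 1 ≤ r ∧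
        w = (r : ℂ) * Complex.exp (2 * Real.pi * Complex.I * j / m)} := by
  have hm0 : m ≠ 0 := Nat.one_le_iff_ne_zero.mp hm
  refine ⟨slitMap_injOn hm0, ?_⟩
  change slitMap m '' _ = _
  ext w
  rw [slitMap_image_ball hm0, koebe_image_ball, Set.mem_preimage, Set.mem_ofPred_eq,
    Set.mem_ofPred_eq, one_sub_mem_slitPlane_iff, exists_ray_iff_pow_eq_ofReal hm0]
end

section
/- In the two-slit case m = 2 with z_1 = e^{it}, z_2 = e^{-it} symmetric about the real axis and angle parameters (γ, 2 − γ), the quantity a_1 = |1 − c_1/z_1| · |1 − c_2/z_1| equals 2γ when c_1, c_2 are the two critical points; i.e., a_1(γ_1, γ_2) = 2γ_1. -/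
/-!
Clearing denominators, the critical points are the roots of `c² + (γ - 1)(z₁ - z₂)c - 1` with
`z₁ - z₂ = 2i sin t`, so they lie on the unit circle and are mirror images `c₂ = -c̄₁` in the
imaginary axis. Both slit tips lying on the unit circle means that
`|z₁ - c|^γ |z₂ - c|^(2-γ)` takes the same value at `c₁` and `c₂`. Passing from `c₁` to `c₂`
changes both `|z₁ - c|²` and `|z₂ - c|²` by the same amount `4 cos t · Re c₁`, so by monotonicity
`cos t = 0`. Finally, by Vieta, `(z₁ - c₁)(z₁ - c₂) = γ z₁ (z₁ - z₂)`, of modulus `2γ |sin t| = 2γ`.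
-/

open Complex ComplexConjugate

theorem quadratic_of_two_slit_critical_point {γ z₁ z₂ c : ℂ} (hz : z₁ * z₂ = 1)
    (h₁ : c ≠ z₁) (h₂ : c ≠ z₂) (h : γ * c / (c - z₁) + (2 - γ) * c / (c - z₂) = 1) :
    c ^ 2 + (γ - 1) * (z₁ - z₂) * c + -1 = 0 := by
  have d₁ : c - z₁ ≠ 0 := sub_ne_zero.mpr h₁
  have d₂ : c - z₂ ≠ 0 := sub_ne_zero.mpr h₂
  field_simp at h
  linear_combination h + hz

theorem add_eq_neg_and_mul_eq_of_quadratic {K : Type*} [Field K] {b d c₁ c₂ : K} (hne : c₁ ≠ c₂)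
    (h₁ : c₁ ^ 2 + b * c₁ + d = 0) (h₂ : c₂ ^ 2 + b * c₂ + d = 0) :
    c₁ + c₂ = -b ∧ c₁ * c₂ = d := by
  have hsum : c₁ + c₂ = -b := by
    have : (c₁ - c₂) * (c₁ + c₂ + b) = 0 := by linear_combination h₁ - h₂
    linear_combination (mul_eq_zero.mp this).resolve_left (sub_ne_zero.mpr hne)
  exact ⟨hsum, by linear_combination c₁ * hsum - h₁⟩

theorem norm_eq_one_and_eq_neg_conj_of_add_eq_mul_I {c₁ c₂ : ℂ} {τ : ℝ} (hτ : τ ^ 2 < 4)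
    (hsum : c₁ + c₂ = τ * I) (hprod : c₁ * c₂ = -1) :
    ‖c₁‖ = 1 ∧ c₁.re ≠ 0 ∧ c₂ = -conj c₁ := by
  have hc₂ : c₂ = τ * I - c₁ := by linear_combination hsum
  have hre := congrArg re hprod
  have him := congrArg im hprod
  simp only [hc₂, mul_re, mul_im, sub_re, sub_im, ofReal_re, ofReal_im, I_re, I_im, neg_re,
    neg_im, one_re, one_im] at hre him
  have hx : c₁.re ≠ 0 := by
    intro h0
    rw [h0] at hre
    nlinarith [sq_nonneg (2 * c₁.im - τ)]
  have hy : τ = 2 * c₁.im := by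
    have : c₁.re * (τ - 2 * c₁.im) = 0 := by linear_combination him
    linarith [(mul_eq_zero.mp this).resolve_left hx]
  refine ⟨?_, hx, ?_⟩
  · rw [norm_eq_sqrt_sq_add_sq, Real.sqrt_eq_one]
    subst hy
    linear_combination -hre
  · rw [hc₂, hy]
    linear_combination -sub_conj c₁

theorem norm_add_conj_sq_sub_norm_sub_sq (z c : ℂ) :
    ‖z + conj c‖ ^ 2 - ‖z - c‖ ^ 2 = 4 * z.re * c.re := by
  simp only [Complex.sq_norm, normSq_apply, add_re, add_im, sub_re, sub_im, conj_re, conj_im]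
  ring

theorem norm_one_sub_div_cpow {z : ℂ} (hz : ‖z‖ = 1) (c : ℂ) (p : ℝ) :
    ‖(1 - c / z) ^ (p : ℂ)‖ = ‖z - c‖ ^ p := by
  have hz0 : z ≠ 0 := norm_ne_zero_iff.mp (by rw [hz]; exact one_ne_zero)
  rw [norm_cpow_real, one_sub_div hz0, norm_div, hz, div_one]

theorem rpow_mul_rpow_lt_rpow_mul_rpow {p q A₁ B₁ A₂ B₂ : ℝ} (hp : 0 < p) (hq : 0 < q)
    (hA₁ : 0 ≤ A₁) (hB₁ : 0 ≤ B₁) (hA : A₁ < A₂) (hB : B₁ < B₂) :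
    A₁ ^ p * B₁ ^ q < A₂ ^ p * B₂ ^ q :=
  mul_lt_mul'' (Real.rpow_lt_rpow hA₁ hA hp) (Real.rpow_lt_rpow hB₁ hB hq)
    (Real.rpow_nonneg hA₁ p) (Real.rpow_nonneg hB₁ q)

theorem sq_eq_sq_of_rpow_mul_rpow_eq {p q A₁ B₁ A₂ B₂ : ℝ} (hp : 0 < p) (hq : 0 < q)
    (hA₁ : 0 ≤ A₁) (hB₁ : 0 ≤ B₁) (hA₂ : 0 ≤ A₂) (hB₂ : 0 ≤ B₂)
    (hsq : A₂ ^ 2 - A₁ ^ 2 = B₂ ^ 2 - B₁ ^ 2)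
    (h : A₁ ^ p * B₁ ^ q = A₂ ^ p * B₂ ^ q) : A₂ ^ 2 - A₁ ^ 2 = 0 := by
  rcases lt_trichotomy (A₂ ^ 2 - A₁ ^ 2) 0 with hu | hu | hu
  · have := rpow_mul_rpow_lt_rpow_mul_rpow hp hq hA₂ hB₂
      (lt_of_pow_lt_pow_left₀ 2 hA₁ (by linarith)) (lt_of_pow_lt_pow_left₀ 2 hB₁ (by linarith))
    linarith
  · exact hu
  · have := rpow_mul_rpow_lt_rpow_mul_rpow hp hq hA₁ hB₁
      (lt_of_pow_lt_pow_left₀ 2 hA₂ (by linarith)) (lt_of_pow_lt_pow_left₀ 2 hB₂ (by linarith))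
    linarith

theorem re_eq_zero_of_rpow_mul_rpow_eq {p q : ℝ} (hp : 0 < p) (hq : 0 < q) {z c : ℂ}
    (hc : c.re ≠ 0)
    (h : ‖z - c‖ ^ p * ‖conj z - c‖ ^ q = ‖z + conj c‖ ^ p * ‖conj z + conj c‖ ^ q) :
    z.re = 0 := by
  have h₁ := norm_add_conj_sq_sub_norm_sub_sq z c
  have h₂ := norm_add_conj_sq_sub_norm_sub_sq (conj z) c
  rw [conj_re] at h₂
  have h0 := sq_eq_sq_of_rpow_mul_rpow_eq hp hq (norm_nonneg _) (norm_nonneg _)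
    (norm_nonneg _) (norm_nonneg _) (h₁.trans h₂.symm) h
  rw [h₁] at h0
  simpa [hc] using h0

theorem norm_one_sub_div_mul_norm_one_sub_div {z : ℂ} (hz : ‖z‖ = 1) (c₁ c₂ : ℂ) :
    ‖1 - c₁ / z‖ * ‖1 - c₂ / z‖ = ‖(z - c₁) * (z - c₂)‖ := by
  have hz0 : z ≠ 0 := norm_ne_zero_iff.mp (by rw [hz]; exact one_ne_zero)
  rw [one_sub_div hz0, one_sub_div hz0, norm_div, norm_div, hz, norm_mul, div_one, div_one]

theorem rpow_mul_rpow_eq_norm_of_norm_slit_map_eq_one {z₁ z₂ c : ℂ} {ρ₀ γ : ℝ}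
    (hz₁ : ‖z₁‖ = 1) (hz₂ : ‖z₂‖ = 1) (hc : ‖c‖ = 1)
    (h : ‖(ρ₀ : ℂ) * c * (1 - c / z₁) ^ (-(γ : ℂ)) * (1 - c / z₂) ^ (-(2 - (γ : ℂ)))‖ = 1) :
    ‖z₁ - c‖ ^ γ * ‖z₂ - c‖ ^ (2 - γ) = ‖ρ₀‖ := by
  have e₁ : -(γ : ℂ) = ((-γ : ℝ) : ℂ) := by push_cast; ring
  have e₂ : -(2 - (γ : ℂ)) = ((-(2 - γ) : ℝ) : ℂ) := by push_cast; ring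
  rw [e₁, e₂, norm_mul, norm_mul, norm_mul, norm_one_sub_div_cpow hz₁,
    norm_one_sub_div_cpow hz₂, Real.rpow_neg (norm_nonneg _), Real.rpow_neg (norm_nonneg _),
    norm_real, hc, mul_one, mul_assoc, ← mul_inv] at h
  have hne : ‖z₁ - c‖ ^ γ * ‖z₂ - c‖ ^ (2 - γ) ≠ 0 := by
    rintro h0
    rw [h0, inv_zero, mul_zero] at h
    exact zero_ne_one h
  exact ((mul_inv_eq_one₀ hne).mp h).symm

theorem two_slit_a1_eq_general (t γ : ℝ) (hγ : γ ∈ Set.Ioo (0 : ℝ) 2)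
    (z₁ z₂ c₁ c₂ : ℂ) (ρ₀ : ℝ)
    (hz₁ : z₁ = Complex.exp (t * Complex.I))
    (hz₂ : z₂ = Complex.exp (-t * Complex.I))
    (hne : c₁ ≠ c₂)
    (hc₁ : c₁ ≠ z₁ ∧ c₁ ≠ z₂ ∧
      (γ : ℂ) * c₁ / (c₁ - z₁) + (2 - (γ : ℂ)) * c₁ / (c₁ - z₂) = 1)
    (hc₂ : c₂ ≠ z₁ ∧ c₂ ≠ z₂ ∧
      (γ : ℂ) * c₂ / (c₂ - z₁) + (2 - (γ : ℂ)) * c₂ / (c₂ - z₂) = 1)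
    (htip₁ : ‖
      ((ρ₀ : ℂ) * c₁ * (1 - c₁ / z₁) ^ (-(γ : ℂ)) * (1 - c₁ / z₂) ^ (-(2 - (γ : ℂ))))‖ = 1)
    (htip₂ : ‖
      ((ρ₀ : ℂ) * c₂ * (1 - c₂ / z₁) ^ (-(γ : ℂ)) * (1 - c₂ / z₂) ^ (-(2 - (γ : ℂ))))‖ = 1) :
    ‖1 - c₁ / z₁‖ * ‖1 - c₂ / z₁‖ = 2 * γ := by
  obtain ⟨hγ0, hγ2⟩ := hγ
  have hz₁norm : ‖z₁‖ = 1 := by rw [hz₁, norm_exp_ofReal_mul_I]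
  have hz₂conj : z₂ = conj z₁ := by rw [hz₁, hz₂, ← exp_conj]; simp
  have hz₂norm : ‖z₂‖ = 1 := by rw [hz₂conj, norm_conj, hz₁norm]
  have hz₁z₂ : z₁ * z₂ = 1 := by rw [hz₂conj, mul_conj', hz₁norm]; simp
  have hsub : z₁ - z₂ = (2 * z₁.im : ℝ) * I := by rw [hz₂conj, sub_conj]
  obtain ⟨hsum, hprod⟩ := add_eq_neg_and_mul_eq_of_quadratic hne
    (quadratic_of_two_slit_critical_point hz₁z₂ hc₁.1 hc₁.2.1 hc₁.2.2)
    (quadratic_of_two_slit_critical_point hz₁z₂ hc₂.1 hc₂.2.1 hc₂.2.2)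
  have hτ : (-(γ - 1) * (2 * z₁.im)) ^ 2 < 4 := by
    have him : z₁.im ^ 2 ≤ 1 := sq_le_one_iff_abs_le_one _ |>.mpr (hz₁norm ▸ abs_im_le_norm z₁)
    nlinarith [mul_pos hγ0 (sub_pos.2 hγ2), mul_le_mul_of_nonneg_left him (sq_nonneg (γ - 1))]
  obtain ⟨hc₁norm, hc₁re, hc₂eq⟩ := norm_eq_one_and_eq_neg_conj_of_add_eq_mul_I hτ
    (by rw [hsum, hsub]; push_cast; ring) hprod
  have hc₂norm : ‖c₂‖ = 1 := by rw [hc₂eq, norm_neg, norm_conj, hc₁norm]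
  have hF := (rpow_mul_rpow_eq_norm_of_norm_slit_map_eq_one hz₁norm hz₂norm hc₁norm htip₁).trans
    (rpow_mul_rpow_eq_norm_of_norm_slit_map_eq_one hz₁norm hz₂norm hc₂norm htip₂).symm
  rw [hc₂eq, sub_neg_eq_add, sub_neg_eq_add, hz₂conj] at hF
  have hre : z₁.re = 0 := re_eq_zero_of_rpow_mul_rpow_eq hγ0 (by linarith) hc₁re hF
  have hvieta : (z₁ - c₁) * (z₁ - c₂) = γ * z₁ * (z₁ - z₂) := by
    linear_combination (-z₁) * hsum + hprod + hz₁z₂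
  rw [norm_one_sub_div_mul_norm_one_sub_div hz₁norm, hvieta, hsub]
  simp only [ofReal_mul, ofReal_ofNat, Complex.norm_mul, norm_real, Real.norm_eq_abs,
    abs_of_pos hγ0, hz₁norm, mul_one, norm_ofNat, abs_im_eq_norm.mpr hre, norm_I]
  ring

/-- Two-slit case of Theorem 2(b): with accessory parameters `z₁ = e^(it)`, `z₂ = e^(-it)`
symmetric about the real axis, angle parameters `(γ, 2-γ)`, and `c₁ ≠ c₂` the critical
points (roots of `γz/(z-z₁) + (2-γ)z/(z-z₂) = 1`) whose images under
`φ₊(z) = ρ₀ z (1 - z/z₁)^(-γ) (1 - z/z₂)^(-(2-γ))` lie on the unit circle (the slit tips),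
we have `a₁ = |1 - c₁/z₁| · |1 - c₂/z₁| = 2γ`. -/
theorem two_slit_a1_eq (t γ : ℝ) (hγ : γ ∈ Set.Ioo (0 : ℝ) 2)
    (z₁ z₂ c₁ c₂ : ℂ) (ρ₀ : ℝ) (hρ : 0 < ρ₀)
    (hz₁ : z₁ = Complex.exp (t * Complex.I))
    (hz₂ : z₂ = Complex.exp (-t * Complex.I))
    (hne : c₁ ≠ c₂)
    (hc₁ : c₁ ≠ z₁ ∧ c₁ ≠ z₂ ∧
      (γ : ℂ) * c₁ / (c₁ - z₁) + (2 - (γ : ℂ)) * c₁ / (c₁ - z₂) = 1)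
    (hc₂ : c₂ ≠ z₁ ∧ c₂ ≠ z₂ ∧
      (γ : ℂ) * c₂ / (c₂ - z₁) + (2 - (γ : ℂ)) * c₂ / (c₂ - z₂) = 1)
    (htip₁ : ‖
      ((ρ₀ : ℂ) * c₁ * (1 - c₁ / z₁) ^ (-(γ : ℂ)) * (1 - c₁ / z₂) ^ (-(2 - (γ : ℂ))))‖ = 1)
    (htip₂ : ‖
      ((ρ₀ : ℂ) * c₂ * (1 - c₂ / z₁) ^ (-(γ : ℂ)) * (1 - c₂ / z₂) ^ (-(2 - (γ : ℂ))))‖ = 1) :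
    ‖1 - c₁ / z₁‖ * ‖1 - c₂ / z₁‖ = 2 * γ :=
  two_slit_a1_eq_general t γ hγ z₁ z₂ c₁ c₂ ρ₀ hz₁ hz₂ hne hc₁ hc₂ htip₁ htip₂
end
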